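/- For β = 1, let J(α) := ∫_0^1 λ^{−1/2} · min( α (1−λ)^{−1/2} , λ^{−1/2} ) dλ for α > 0. There exist constants 0 < c ≤ C such that for all α with 0 < α < 1: c·α ≤ J(α) ≤ C·α, and for all α ≥ 1: c·(1 + log α) ≤ J(α) ≤ C·(1 + log α). -/

import Mathlib

open MeasureTheory

/-- `J(α) = ∫_0^1 λ^{-1/2} min(α(1-λ)^{-1/2}, λ^{-1/2}) dλ`. -/
noncomputable def Jone (α : ℝ) : ℝ :=
  ∫ l in Set.Ioo (0 : ℝ) 1,
    l ^ (-(1 : ℝ) / 2) * min (α * (1 - l) ^ (-(1 : ℝ) / 2)) (l ^ (-(1 : ℝ) / 2))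

namespace JoneAux

open Set Real

noncomputable def f (α l : ℝ) : ℝ :=
  l ^ (-(1 : ℝ) / 2) * min (α * (1 - l) ^ (-(1 : ℝ) / 2)) (l ^ (-(1 : ℝ) / 2))

lemma Jone_eq (α : ℝ) : Jone α = ∫ l in Set.Ioo (0 : ℝ) 1, f α l := rfl

lemma rpow_half (x : ℝ) (hx : 0 ≤ x) : x ^ (-(1 : ℝ) / 2) = (Real.sqrt x)⁻¹ := by
  rw [Real.sqrt_eq_rpow, ← Real.rpow_neg hx]
  norm_num

lemma intOn_rpow (a b : ℝ) :
    IntegrableOn (fun l : ℝ => l ^ (-(1 : ℝ) / 2)) (Ioo a b) := by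
  exact ((intervalIntegral.intervalIntegrable_rpow' (by norm_num) (a := a) (b := b)).1).mono_set
    Ioo_subset_Ioc_self

lemma intOn_one_sub :
    IntegrableOn (fun l : ℝ => (1 - l) ^ (-(1 : ℝ) / 2)) (Ioo (0:ℝ) 1) := by
  have h : IntervalIntegrable (fun x : ℝ => x ^ (-(1 : ℝ) / 2)) volume 0 1 :=
    intervalIntegral.intervalIntegrable_rpow' (by norm_num)
  have h3 : IntervalIntegrable (fun x : ℝ => (1 - x) ^ (-(1 : ℝ) / 2)) volume 0 1 := by
    simpa using (h.comp_sub_left 1).symm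
  exact ((intervalIntegrable_iff_integrableOn_Ioc_of_le zero_le_one).mp h3).mono_set
    Ioo_subset_Ioc_self

lemma int_rpow_Ioo (a b : ℝ) (ha : 0 ≤ a) (hab : a ≤ b) :
    ∫ l in Ioo a b, l ^ (-(1 : ℝ) / 2) = 2 * (Real.sqrt b - Real.sqrt a) := by
  rw [← integral_Ioc_eq_integral_Ioo, ← intervalIntegral.integral_of_le hab,
    integral_rpow (Or.inl (by norm_num))]
  rw [Real.sqrt_eq_rpow, Real.sqrt_eq_rpow]
  norm_num
  ring

lemma int_one_sub_Ioo :
    ∫ l in Ioo (0:ℝ) 1, (1 - l) ^ (-(1 : ℝ) / 2) = 2 := by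
  rw [← integral_Ioc_eq_integral_Ioo, ← intervalIntegral.integral_of_le zero_le_one,
    intervalIntegral.integral_comp_sub_left (fun x : ℝ => x ^ (-(1 : ℝ) / 2)) 1,
    integral_rpow (Or.inl (by norm_num))]
  norm_num

lemma int_inv_Ioo (t : ℝ) (ht : 0 < t) (ht1 : t ≤ 1) :
    ∫ l in Ioo t 1, l⁻¹ = - Real.log t := by
  rw [← integral_Ioc_eq_integral_Ioo, ← intervalIntegral.integral_of_le ht1,
    integral_inv_of_pos ht one_pos, one_div, Real.log_inv]

lemma f_nonneg {α l : ℝ} (hα : 0 ≤ α) (hl : l ∈ Ioo (0:ℝ) 1) : 0 ≤ f α l := by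
  have h1 : (0:ℝ) ≤ l ^ (-(1 : ℝ) / 2) := Real.rpow_nonneg hl.1.le _
  have h2 : (0:ℝ) ≤ (1 - l) ^ (-(1 : ℝ) / 2) := Real.rpow_nonneg (by linarith [hl.2]) _
  exact mul_nonneg h1 (le_min (mul_nonneg hα h2) h1)

lemma f_le_g {α l : ℝ} (hα : 0 ≤ α) (hl : l ∈ Ioo (0:ℝ) 1) :
    f α l ≤ Real.sqrt 2 * α * (l ^ (-(1 : ℝ) / 2) + (1 - l) ^ (-(1 : ℝ) / 2)) := by
  obtain ⟨hl0, hl1⟩ := hl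
  have h1l : (0:ℝ) < 1 - l := by linarith
  rw [f, rpow_half l hl0.le, rpow_half (1 - l) h1l.le]
  have ha0 : (0:ℝ) < Real.sqrt l := Real.sqrt_pos.2 hl0
  have hb0 : (0:ℝ) < Real.sqrt (1 - l) := Real.sqrt_pos.2 h1l
  have hs2 : (0:ℝ) < Real.sqrt 2 := by positivity
  rcases le_total l (1/2) with hc | hc
  · have hb : (Real.sqrt (1 - l))⁻¹ ≤ Real.sqrt 2 := by
      rw [show Real.sqrt 2 = ((Real.sqrt 2)⁻¹)⁻¹ by rw [inv_inv]]
      apply inv_anti₀ (by positivity)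
      rw [← Real.sqrt_inv]
      exact Real.sqrt_le_sqrt (by norm_num; linarith)
    calc (Real.sqrt l)⁻¹ * min (α * (Real.sqrt (1 - l))⁻¹) (Real.sqrt l)⁻¹
        ≤ (Real.sqrt l)⁻¹ * (α * (Real.sqrt (1 - l))⁻¹) := by
          exact mul_le_mul_of_nonneg_left (min_le_left _ _) (by positivity)
      _ ≤ (Real.sqrt l)⁻¹ * (α * Real.sqrt 2) := by
          apply mul_le_mul_of_nonneg_left (mul_le_mul_of_nonneg_left hb hα) (by positivity)
      _ = Real.sqrt 2 * α * (Real.sqrt l)⁻¹ := by ring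
      _ ≤ Real.sqrt 2 * α * ((Real.sqrt l)⁻¹ + (Real.sqrt (1 - l))⁻¹) := by
          exact mul_le_mul_of_nonneg_left (le_add_of_nonneg_right (by positivity)) (by positivity)
  · have hb : (Real.sqrt l)⁻¹ ≤ Real.sqrt 2 := by
      rw [show Real.sqrt 2 = ((Real.sqrt 2)⁻¹)⁻¹ by rw [inv_inv]]
      apply inv_anti₀ (by positivity)
      rw [← Real.sqrt_inv]
      exact Real.sqrt_le_sqrt (by norm_num; linarith)
    calc (Real.sqrt l)⁻¹ * min (α * (Real.sqrt (1 - l))⁻¹) (Real.sqrt l)⁻¹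
        ≤ (Real.sqrt l)⁻¹ * (α * (Real.sqrt (1 - l))⁻¹) := by
          exact mul_le_mul_of_nonneg_left (min_le_left _ _) (by positivity)
      _ ≤ Real.sqrt 2 * (α * (Real.sqrt (1 - l))⁻¹) := by
          apply mul_le_mul_of_nonneg_right hb (by positivity)
      _ = Real.sqrt 2 * α * (Real.sqrt (1 - l))⁻¹ := by ring
      _ ≤ Real.sqrt 2 * α * ((Real.sqrt l)⁻¹ + (Real.sqrt (1 - l))⁻¹) := by
          exact mul_le_mul_of_nonneg_left (le_add_of_nonneg_left (by positivity)) (by positivity)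

lemma g_integrable (α : ℝ) :
    IntegrableOn (fun l : ℝ =>
      Real.sqrt 2 * α * (l ^ (-(1 : ℝ) / 2) + (1 - l) ^ (-(1 : ℝ) / 2))) (Ioo (0:ℝ) 1) :=
  ((intOn_rpow 0 1).add intOn_one_sub).const_mul _

lemma f_measurable (α : ℝ) : Measurable (f α) := by
  unfold f
  fun_prop

lemma f_integrable {α : ℝ} (hα : 0 ≤ α) : IntegrableOn (f α) (Ioo (0:ℝ) 1) := by
  apply Integrable.mono (g_integrable α) ((f_measurable α).aestronglyMeasurable)
  rw [ae_restrict_iff' measurableSet_Ioo]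
  filter_upwards with l hl
  rw [Real.norm_eq_abs, Real.norm_eq_abs, abs_of_nonneg (f_nonneg hα hl),
    abs_of_nonneg (mul_nonneg (mul_nonneg (Real.sqrt_nonneg 2) hα)
      (add_nonneg (Real.rpow_nonneg hl.1.le _) (Real.rpow_nonneg (by linarith [hl.2]) _)))]
  exact f_le_g hα hl

lemma inv_le_f {α l : ℝ} (hα : 0 < α) (hl : l ∈ Ioo (0:ℝ) 1)
    (ht : 1 / (1 + α ^ 2) < l) : l⁻¹ ≤ f α l := by
  obtain ⟨hl0, hl1⟩ := hl
  have h1l : (0:ℝ) < 1 - l := by linarith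
  have ha0 : (0:ℝ) < Real.sqrt l := Real.sqrt_pos.2 hl0
  have hb0 : (0:ℝ) < Real.sqrt (1 - l) := Real.sqrt_pos.2 h1l
  have hkey : Real.sqrt (1 - l) ≤ α * Real.sqrt l := by
    have h2 : 1 - l ≤ α ^ 2 * l := by
      have hpos : (0:ℝ) < 1 + α ^ 2 := by positivity
      rw [div_lt_iff₀ hpos] at ht
      nlinarith
    calc Real.sqrt (1 - l) ≤ Real.sqrt (α ^ 2 * l) := Real.sqrt_le_sqrt h2
      _ = α * Real.sqrt l := by
          rw [Real.sqrt_mul (by positivity), Real.sqrt_sq hα.le]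
  have hmin : (Real.sqrt l)⁻¹ ≤ α * (Real.sqrt (1 - l))⁻¹ := by
    rw [← one_div, ← one_div, mul_one_div, div_le_div_iff₀ ha0 hb0]
    nlinarith
  rw [f, rpow_half l hl0.le, rpow_half (1 - l) h1l.le, min_eq_right hmin,
    ← mul_inv, Real.mul_self_sqrt hl0.le]

lemma f_le_inv {α l : ℝ} (hα : 0 ≤ α) (hl : l ∈ Ioo (0:ℝ) 1) : f α l ≤ l⁻¹ := by
  obtain ⟨hl0, hl1⟩ := hl
  have ha0 : (0:ℝ) < Real.sqrt l := Real.sqrt_pos.2 hl0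
  have h1l : (0:ℝ) < 1 - l := by linarith
  calc f α l ≤ l ^ (-(1 : ℝ) / 2) * l ^ (-(1 : ℝ) / 2) := by
        apply mul_le_mul_of_nonneg_left (min_le_right _ _) (Real.rpow_nonneg hl0.le _)
    _ = l⁻¹ := by
        rw [rpow_half l hl0.le, ← mul_inv, Real.mul_self_sqrt hl0.le]

lemma inv_sqrt_le {x : ℝ} (hx : 1/2 ≤ x) : (Real.sqrt x)⁻¹ ≤ Real.sqrt 2 := by
  rw [show Real.sqrt 2 = ((Real.sqrt 2)⁻¹)⁻¹ by rw [inv_inv]]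
  apply inv_anti₀ (by positivity)
  rw [← Real.sqrt_inv]
  exact Real.sqrt_le_sqrt (by linarith)

lemma f_le_left {α l : ℝ} (hα : 0 ≤ α) (hl0 : 0 < l) (hl2 : l ≤ 1/2) :
    f α l ≤ Real.sqrt 2 * α * l ^ (-(1 : ℝ) / 2) := by
  have h1l : (0:ℝ) < 1 - l := by linarith
  rw [f, rpow_half l hl0.le, rpow_half (1 - l) h1l.le]
  have hb : (Real.sqrt (1 - l))⁻¹ ≤ Real.sqrt 2 := inv_sqrt_le (by linarith)
  calc (Real.sqrt l)⁻¹ * min (α * (Real.sqrt (1 - l))⁻¹) (Real.sqrt l)⁻¹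
      ≤ (Real.sqrt l)⁻¹ * (α * Real.sqrt 2) := by
        exact mul_le_mul_of_nonneg_left
          ((min_le_left _ _).trans (mul_le_mul_of_nonneg_left hb hα)) (by positivity)
    _ = Real.sqrt 2 * α * (Real.sqrt l)⁻¹ := by ring

end JoneAux

/-- β = 1 case: there are `0 < c ≤ C` with `cα ≤ J(α) ≤ Cα` for `0 < α < 1`
and `c(1 + log α) ≤ J(α) ≤ C(1 + log α)` for `α ≥ 1`. -/
theorem Jone_asymp :
    ∃ c C : ℝ, 0 < c ∧ c ≤ C ∧
      (∀ α : ℝ, 0 < α → α < 1 → c * α ≤ Jone α ∧ Jone α ≤ C * α) ∧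
      (∀ α : ℝ, 1 ≤ α →
        c * (1 + Real.log α) ≤ Jone α ∧ Jone α ≤ C * (1 + Real.log α)) := by
  refine ⟨1/2, 6, by norm_num, by norm_num, ?_, ?_⟩
  · -- small α
    intro α hα0 hα1
    have hfi := JoneAux.f_integrable hα0.le
    constructor
    · have h1 : (∫ l in Set.Ioo (0:ℝ) 1, α * l ^ (-(1:ℝ)/2)) ≤ Jone α := by
        rw [JoneAux.Jone_eq]
        apply setIntegral_mono_on ((JoneAux.intOn_rpow 0 1).const_mul α) hfi measurableSet_Ioo
        intro l hl
        obtain ⟨hl0, hl1⟩ := hl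
        have h1l : (0:ℝ) < 1 - l := by linarith
        have e1 : (1:ℝ) ≤ (1 - l) ^ (-(1:ℝ)/2) := by
          rw [JoneAux.rpow_half _ h1l.le]
          exact (one_le_inv₀ (Real.sqrt_pos.2 h1l)).2 (Real.sqrt_le_one.2 (by linarith))
        have e2 : (1:ℝ) ≤ l ^ (-(1:ℝ)/2) := by
          rw [JoneAux.rpow_half _ hl0.le]
          exact (one_le_inv₀ (Real.sqrt_pos.2 hl0)).2 (Real.sqrt_le_one.2 hl1.le)
        have hmin : α ≤ min (α * (1 - l) ^ (-(1:ℝ)/2)) (l ^ (-(1:ℝ)/2)) :=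
          le_min (le_mul_of_one_le_right hα0.le e1) (hα1.le.trans e2)
        calc α * l ^ (-(1:ℝ)/2) = l ^ (-(1:ℝ)/2) * α := mul_comm _ _
          _ ≤ JoneAux.f α l :=
            mul_le_mul_of_nonneg_left hmin (Real.rpow_nonneg hl0.le _)
      have h2 : (∫ l in Set.Ioo (0:ℝ) 1, α * l ^ (-(1:ℝ)/2)) = 2 * α := by
        rw [MeasureTheory.integral_const_mul, JoneAux.int_rpow_Ioo 0 1 le_rfl zero_le_one]
        rw [Real.sqrt_one, Real.sqrt_zero]
        ring
      linarith
    · have h1 : Jone α ≤ ∫ l in Set.Ioo (0:ℝ) 1,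
          Real.sqrt 2 * α * (l ^ (-(1:ℝ)/2) + (1-l) ^ (-(1:ℝ)/2)) := by
        rw [JoneAux.Jone_eq]
        exact setIntegral_mono_on hfi (JoneAux.g_integrable α) measurableSet_Ioo
          (fun l hl => JoneAux.f_le_g hα0.le hl)
      have h2 : (∫ l in Set.Ioo (0:ℝ) 1,
          Real.sqrt 2 * α * (l ^ (-(1:ℝ)/2) + (1-l) ^ (-(1:ℝ)/2)))
          = Real.sqrt 2 * α * 4 := by
        rw [MeasureTheory.integral_const_mul,
          MeasureTheory.integral_add (JoneAux.intOn_rpow 0 1) JoneAux.intOn_one_sub,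
          JoneAux.int_rpow_Ioo 0 1 le_rfl zero_le_one, JoneAux.int_one_sub_Ioo,
          Real.sqrt_one, Real.sqrt_zero]
        ring
      have h3 : Real.sqrt 2 ≤ 1.5 := by
        nlinarith [Real.sq_sqrt (by norm_num : (0:ℝ) ≤ 2), Real.sqrt_nonneg 2]
      nlinarith [Real.sqrt_nonneg 2]
  · -- large α
    intro α hα
    have hα0 : (0:ℝ) < α := lt_of_lt_of_le one_pos hα
    have hlog : 0 ≤ Real.log α := Real.log_nonneg hα
    have hfi := JoneAux.f_integrable hα0.le
    constructor
    · -- lower bound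
      set t : ℝ := 1 / (1 + α ^ 2) with htdef
      have ht0 : 0 < t := by positivity
      have ht1 : t < 1 := by
        rw [htdef, div_lt_one (by positivity)]; nlinarith
      have hsub : (∫ l in Set.Ioo t 1, JoneAux.f α l) ≤ Jone α := by
        rw [JoneAux.Jone_eq]
        apply setIntegral_mono_set hfi
        · rw [Filter.EventuallyLE, ae_restrict_iff' measurableSet_Ioo]
          exact Filter.Eventually.of_forall fun l hl => JoneAux.f_nonneg hα0.le hl
        · exact (Set.Ioo_subset_Ioo ht0.le le_rfl).eventuallyLE
      have hinv : IntegrableOn (fun l : ℝ => l⁻¹) (Set.Ioo t 1) := by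
        have hc : ContinuousOn (fun l : ℝ => l⁻¹) (Set.Icc t 1) :=
          ContinuousOn.inv₀ continuousOn_id
            (fun x hx => ne_of_gt (lt_of_lt_of_le ht0 hx.1))
        exact (hc.integrableOn_compact isCompact_Icc).mono_set Set.Ioo_subset_Icc_self
      have hmono : (∫ l in Set.Ioo t 1, (l:ℝ)⁻¹) ≤ ∫ l in Set.Ioo t 1, JoneAux.f α l := by
        apply setIntegral_mono_on hinv
          (hfi.mono_set (Set.Ioo_subset_Ioo ht0.le le_rfl)) measurableSet_Ioo
        intro l hl
        exact JoneAux.inv_le_f hα0 ⟨lt_trans ht0 hl.1, hl.2⟩ hl.1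
      have hval : (∫ l in Set.Ioo t 1, (l:ℝ)⁻¹) = Real.log (1 + α ^ 2) := by
        rw [JoneAux.int_inv_Ioo t ht0 ht1.le, htdef, one_div, Real.log_inv, neg_neg]
      have hlog2 : Real.log (2 * α) ≤ Real.log (1 + α ^ 2) :=
        Real.log_le_log (by positivity) (by nlinarith)
      rw [Real.log_mul (by norm_num) hα0.ne'] at hlog2
      have l2 : (0.6931471803 : ℝ) < Real.log 2 := Real.log_two_gt_d9
      linarith
    · -- upper bound
      set u : ℝ := 1 / (2 * α ^ 2) with hudef
      have hu0 : 0 < u := by positivity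
      have hu2 : u ≤ 1/2 := by
        rw [hudef]
        exact one_div_le_one_div_of_le (by norm_num) (by nlinarith)
      have hu1 : u < 1 := lt_of_le_of_lt hu2 (by norm_num)
      have hIoo : Set.Ioo (0:ℝ) u ⊆ Set.Ioo (0:ℝ) 1 := Set.Ioo_subset_Ioo le_rfl hu1.le
      have hIco : Set.Ico u 1 ⊆ Set.Ioo (0:ℝ) 1 :=
        fun x hx => ⟨lt_of_lt_of_le hu0 hx.1, hx.2⟩
      have hsplit : Jone α
          = (∫ l in Set.Ioo 0 u, JoneAux.f α l) + ∫ l in Set.Ico u 1, JoneAux.f α l := by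
        rw [JoneAux.Jone_eq, ← Set.Ioo_union_Ico_eq_Ioo hu0 hu1.le]
        exact setIntegral_union
          (by rw [Set.disjoint_left]; rintro x hx hx'; exact absurd hx'.1 (not_le.2 hx.2))
          measurableSet_Ico (hfi.mono_set hIoo) (hfi.mono_set hIco)
      have hb1 : (∫ l in Set.Ioo 0 u, JoneAux.f α l) ≤ 2 := by
        have hle : (∫ l in Set.Ioo 0 u, JoneAux.f α l)
            ≤ ∫ l in Set.Ioo 0 u, Real.sqrt 2 * α * l ^ (-(1:ℝ)/2) := by
          apply setIntegral_mono_on (hfi.mono_set hIoo)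
            ((JoneAux.intOn_rpow 0 u).const_mul _) measurableSet_Ioo
          intro l hl
          exact JoneAux.f_le_left hα0.le hl.1 (le_of_lt (lt_of_lt_of_le hl.2 hu2))
        have hsu : Real.sqrt u = (Real.sqrt 2 * α)⁻¹ := by
          rw [hudef, one_div, Real.sqrt_inv, Real.sqrt_mul (by norm_num), Real.sqrt_sq hα0.le]
        have hne : Real.sqrt 2 * α ≠ 0 := by positivity
        have hval : (∫ l in Set.Ioo 0 u, Real.sqrt 2 * α * l ^ (-(1:ℝ)/2)) = 2 := by
          rw [MeasureTheory.integral_const_mul, JoneAux.int_rpow_Ioo 0 u le_rfl hu0.le,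
            Real.sqrt_zero, hsu]
          field_simp
          simp
        linarith
      have hb2 : (∫ l in Set.Ico u 1, JoneAux.f α l) ≤ Real.log 2 + 2 * Real.log α := by
        have hinv : IntegrableOn (fun l : ℝ => l⁻¹) (Set.Ico u 1) := by
          have hc : ContinuousOn (fun l : ℝ => l⁻¹) (Set.Icc u 1) :=
            ContinuousOn.inv₀ continuousOn_id
              (fun x hx => ne_of_gt (lt_of_lt_of_le hu0 hx.1))
          exact (hc.integrableOn_compact isCompact_Icc).mono_set Set.Ico_subset_Icc_self
        have hle : (∫ l in Set.Ico u 1, JoneAux.f α l) ≤ ∫ l in Set.Ico u 1, (l:ℝ)⁻¹ :=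
          setIntegral_mono_on (hfi.mono_set hIco) hinv measurableSet_Ico
            (fun l hl => JoneAux.f_le_inv hα0.le (hIco hl))
        have hval : (∫ l in Set.Ico u 1, (l:ℝ)⁻¹) = Real.log 2 + 2 * Real.log α := by
          rw [MeasureTheory.integral_Ico_eq_integral_Ioo,
            JoneAux.int_inv_Ioo u hu0 hu1.le, hudef, one_div, Real.log_inv, neg_neg,
            Real.log_mul (by norm_num) (pow_ne_zero 2 hα0.ne'), Real.log_pow]
          push_cast
          ring
        linarith
      have l2 : Real.log 2 < (0.6931471808 : ℝ) := Real.log_two_lt_d9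
      rw [hsplit]
      linarith
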